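/- In the quantum Bruhat graph of a finite Weyl group W, for any two elements u, v ∈ W there exists a directed path from u to v. -/

import Mathlib

noncomputable section

open scoped Classical
open scoped RealInnerProductSpace
open Finset

variable {V : Type*} [NormedAddCommGroup V] [InnerProductSpace ℝ V] [FiniteDimensional ℝ V]

/-- A (reduced, crystallographic) root system in a Euclidean space, with a fixed
choice of positive roots `Rpos` and simple roots `Δ`. -/
structure IsRootSystem (R Rpos Δ : Finset V) : Prop where
  nonzero : ∀ α ∈ R, α ≠ (0 : V)
  reduced : ∀ α ∈ R, ∀ c : ℝ, c • α ∈ R → c = 1 ∨ c = -1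
  crystallographic : ∀ α ∈ R, ∀ β ∈ R, ∃ n : ℤ, 2 * ⟪β, α⟫ / ⟪α, α⟫ = (n : ℝ)
  reflect_mem : ∀ α ∈ R, ∀ β ∈ R, β - (2 * ⟪β, α⟫ / ⟪α, α⟫) • α ∈ R
  pos_subset : Rpos ⊆ R
  pos_or_neg : ∀ α ∈ R, α ∈ Rpos ∨ -α ∈ Rpos
  not_both : ∀ α ∈ Rpos, -α ∉ Rpos
  simple_subset : Δ ⊆ Rpos
  simple_nonneg_comb : ∀ α ∈ Rpos, ∃ c : V → ℝ, (∀ β ∈ Δ, 0 ≤ c β) ∧ α = ∑ β ∈ Δ, c β • β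
  simple_indep : LinearIndependent ℝ (fun β : (Δ : Set V) => (β : V))

/-- The coroot `α^∨ = 2α/(α,α)` of a root `α`, in the Euclidean identification. -/
def coroot (α : V) : V := (2 / ⟪α, α⟫) • α

/-- The half-sum `ρ` of the positive roots. -/
def rho (Rpos : Finset V) : V := (2 : ℝ)⁻¹ • ∑ α ∈ Rpos, α

/-- The reflection `r_α` across the hyperplane orthogonal to `α`. -/
def sref (α : V) : V ≃ₗᵢ[ℝ] V := Submodule.reflection (ℝ ∙ α)ᗮ

/-- The Weyl group: the subgroup of isometries generated by the reflections in the roots. -/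
def weylGroup (R : Finset V) : Subgroup (V ≃ₗᵢ[ℝ] V) :=
  Subgroup.closure { g | ∃ α ∈ R, g = sref α }

/-- The length of a Weyl group element: the number of positive roots it sends negative. -/
def lenW (Rpos : Finset V) (w : V ≃ₗᵢ[ℝ] V) : ℕ :=
  (Rpos.filter (fun α => w α ∉ Rpos)).card

/-- Dominance: nonnegative pairing against every positive root. -/
def isDominant (Rpos : Finset V) (lam : V) : Prop := ∀ α ∈ Rpos, 0 ≤ ⟪lam, α⟫

/-- Dominance order: `μ ≤ lam` iff `lam - μ` is a nonnegative rational combination of the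
coroots of the roots in `S`. -/
def domLE (S : Finset V) (μ lam : V) : Prop :=
  ∃ c : V → ℚ, (∀ β ∈ S, 0 ≤ c β) ∧ lam - μ = ∑ β ∈ S, (c β : ℝ) • coroot β

/-- The coroot lattice `Q^∨`. -/
def corootLattice (R : Finset V) : Submodule ℤ V := Submodule.span ℤ (coroot '' (R : Set V))

/-- The quantum Bruhat graph edge relation: `w → w r_α` when either a Bruhat cover or a
quantum edge. -/
def qbgEdge (Rpos : Finset V) (w w' : V ≃ₗᵢ[ℝ] V) : Prop :=
  ∃ α ∈ Rpos, w' = w * sref α ∧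
    ((lenW Rpos w' : ℝ) = (lenW Rpos w : ℝ) + 1 ∨
     (lenW Rpos w' : ℝ) = (lenW Rpos w : ℝ) - ⟪coroot α, (2 : ℝ) • rho Rpos⟫ + 1)

/-! Every simple reflection `s_β` gives an edge `w → w s_β` of the quantum Bruhat graph: if
`w β > 0` it is a Bruhat cover, and otherwise the length drops by one, which is a quantum edge
because `⟨β^∨, 2ρ⟩ = 2`. The simple reflections generate `W`: for a non-simple positive root `α`
some simple `β` has `⟨α, β⟩ > 0`, so `s_α = s_β s_γ s_β` with `γ = s_β α` a positive root of
smaller height. Being involutions, they generate `W` as a monoid, so writing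
`u⁻¹ v = s_{β₁} ⋯ s_{βₖ}` yields the path `u → u s_{β₁} → ⋯ → v`. -/

open Relation

theorem Submonoid.reflTransGen_mul_of_mem_closure {M : Type*} [Monoid M] {S : Set M}
    {r : M → M → Prop} (hr : ∀ w ∈ Submonoid.closure S, ∀ s ∈ S, r w (w * s))
    {w g : M} (hw : w ∈ Submonoid.closure S) (hg : g ∈ Submonoid.closure S) :
    ReflTransGen r w (w * g) := by
  induction hg using Submonoid.closure_induction generalizing w with
  | mem s hs => exact .single (hr w hw s hs)
  | one => rw [mul_one]
  | mul x y hx _ ihx ihy =>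
    rw [← mul_assoc]
    exact (ihx hw).trans (ihy (mul_mem hw hx))

theorem Finset.card_filter_lt_lt_of_lt {ι α : Type*} [Preorder α] {s : Finset ι} {f : ι → α}
    {a b : ι} (hb : b ∈ s) (hba : f b < f a) :
    #{x ∈ s | f x < f b} < #{x ∈ s | f x < f a} := by
  refine card_lt_card ⟨fun x hx => ?_, fun hsub => ?_⟩
  · rw [mem_filter] at hx ⊢
    exact ⟨hx.1, hx.2.trans hba⟩
  · exact lt_irrefl _ (mem_filter.1 (hsub (mem_filter.2 ⟨hb, hba⟩))).2

section

variable {E : Type*} [NormedAddCommGroup E] [InnerProductSpace ℝ E]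

theorem sref_apply (α x : E) : sref α x = x - (2 * ⟪x, α⟫ / ⟪α, α⟫) • α := by
  rw [sref, Submodule.reflection_orthogonal_apply, Submodule.reflection_singleton_apply,
    real_inner_comm α x]
  simp only [RCLike.ofReal_real_eq_id, id_eq]
  rw [← real_inner_self_eq_norm_sq α, mul_div_assoc]
  module

@[simp]
theorem sref_sref (α x : E) : sref α (sref α x) = x := Submodule.reflection_reflection _ _

theorem sref_inv (α : E) : (sref α)⁻¹ = sref α := Submodule.reflection_inv

@[simp]
theorem sref_self (α : E) : sref α α = -α :=
  Submodule.reflection_orthogonalComplement_singleton_eq_neg α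

theorem sref_neg (α : E) : sref (-α) = sref α := by
  ext x
  simp [sref_apply, neg_div]

theorem sref_mul_self (α : E) : sref α * sref α = 1 :=
  LinearIsometryEquiv.ext (sref_sref α)

theorem sref_conj (w : E ≃ₗᵢ[ℝ] E) (α : E) : sref (w α) = w * sref α * w⁻¹ := by
  ext x
  change _ = w (sref α (w.symm x))
  rw [sref_apply, sref_apply, map_sub, map_smul, w.apply_symm_apply,
    ← w.inner_map_map (w.symm x), w.apply_symm_apply, w.inner_map_map]

theorem inner_eq_zero_of_sref_apply_eq {α x : E} (hx : sref α x = x) : ⟪α, x⟫ = 0 := by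
  have h : ⟪sref α α, sref α x⟫ = ⟪α, x⟫ := (sref α).inner_map_map α x
  rw [sref_self, hx, inner_neg_left] at h
  linarith

theorem closure_sref_image_toSubmonoid (S : Set E) :
    (Subgroup.closure (sref '' S)).toSubmonoid = Submonoid.closure (sref '' S) := by
  have hinv : (sref '' S)⁻¹ = sref '' S := by
    rw [← Set.image_inv_eq_inv, Set.image_image]
    simp only [sref_inv]
  rw [Subgroup.closure_toSubmonoid, hinv, Set.union_self]

namespace IsRootSystem

variable {R Rpos Δ : Finset E} {α β : E}

theorem inner_self_pos (h : IsRootSystem R Rpos Δ) (hα : α ∈ R) : 0 < ⟪α, α⟫ :=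
  real_inner_self_pos.2 (h.nonzero α hα)

theorem sref_mem (h : IsRootSystem R Rpos Δ) (hα : α ∈ R) (hβ : β ∈ R) : sref α β ∈ R := by
  rw [sref_apply]
  exact h.reflect_mem α hα β hβ

theorem neg_mem_of_notMem (h : IsRootSystem R Rpos Δ) (hα : α ∈ R) (hαn : α ∉ Rpos) :
    -α ∈ Rpos :=
  (h.pos_or_neg α hα).resolve_left hαn

theorem simple_mem (h : IsRootSystem R Rpos Δ) (hβ : β ∈ Δ) : β ∈ R :=
  h.pos_subset (h.simple_subset hβ)

theorem coeff_eq_of_sum_eq (h : IsRootSystem R Rpos Δ) {c d : E → ℝ}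
    (hcd : ∑ γ ∈ Δ, c γ • γ = ∑ γ ∈ Δ, d γ • γ) : ∀ γ ∈ Δ, c γ = d γ := by
  intro γ hγ
  have hz : ∑ i : Δ, (c i - d i) • (i : E) = 0 := by
    rw [sum_coe_sort Δ fun γ => (c γ - d γ) • γ]
    simp only [sub_smul, sum_sub_distrib, hcd, sub_self]
  exact sub_eq_zero.1 (linearIndependent_iff'.1 h.simple_indep univ _ hz ⟨γ, hγ⟩ (mem_univ _))

theorem sref_simple_mem_pos (h : IsRootSystem R Rpos Δ) (hβ : β ∈ Δ) (hα : α ∈ Rpos)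
    (hne : α ≠ β) : sref β α ∈ Rpos := by
  have hαR := h.pos_subset hα
  by_contra hneg
  obtain ⟨c, hc, hcα⟩ := h.simple_nonneg_comb α hα
  obtain ⟨d, hd, hdα⟩ :=
    h.simple_nonneg_comb _ (h.neg_mem_of_notMem (h.sref_mem (h.simple_mem hβ) hαR) hneg)
  -- `α - s_β α` is a multiple of `β`, so the nonnegative coefficients `c + d` vanish off `β`
  have hsum : ∑ γ ∈ Δ, (c γ + d γ) • γ =
      ∑ γ ∈ Δ, (if γ = β then 2 * ⟪α, β⟫ / ⟪β, β⟫ else 0) • γ := by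
    simp only [add_smul, sum_add_distrib, ← hcα, ← hdα, ite_smul, zero_smul, sum_ite_eq',
      if_pos hβ, sref_apply]
    abel
  have hc0 : ∀ γ ∈ Δ, γ ≠ β → c γ • γ = 0 := fun γ hγ hγβ => by
    have := h.coeff_eq_of_sum_eq hsum γ hγ
    rw [if_neg hγβ] at this
    rw [show c γ = 0 by linarith [hc γ hγ, hd γ hγ], zero_smul]
  have hαβ : α = c β • β := by rw [hcα, sum_eq_single_of_mem β hβ hc0]
  rcases h.reduced β (h.simple_mem hβ) (c β) (hαβ ▸ hαR) with h1 | h1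
  · exact hne (by rw [hαβ, h1, one_smul])
  · exact h.not_both β (h.simple_subset hβ) (by rwa [hαβ, h1, neg_one_smul] at hα)

theorem sref_simple_mem_erase (h : IsRootSystem R Rpos Δ) (hβ : β ∈ Δ)
    (hα : α ∈ Rpos.erase β) : sref β α ∈ Rpos.erase β := by
  rw [mem_erase] at hα ⊢
  refine ⟨fun hαβ => ?_, h.sref_simple_mem_pos hβ hα.2 hα.1⟩
  have : α = -β := by rw [← sref_sref β α, hαβ, sref_self]
  exact h.not_both β (h.simple_subset hβ) (this ▸ hα.2)

theorem exists_simple_inner_pos (h : IsRootSystem R Rpos Δ) (hα : α ∈ Rpos) :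
    ∃ β ∈ Δ, 0 < ⟪α, β⟫ := by
  by_contra! hcon
  obtain ⟨c, hc, hcα⟩ := h.simple_nonneg_comb α hα
  have : ⟪α, α⟫ ≤ 0 := by
    nth_rewrite 2 [hcα]
    rw [inner_sum]
    exact sum_nonpos fun γ hγ => by
      rw [real_inner_smul_right]
      exact mul_nonpos_of_nonneg_of_nonpos (hc γ hγ) (hcon γ hγ)
  linarith [h.inner_self_pos (h.pos_subset hα)]

theorem inner_simple_sum_pos (h : IsRootSystem R Rpos Δ) (hβ : β ∈ Δ) :
    ⟪β, ∑ γ ∈ Rpos, γ⟫ = ⟪β, β⟫ := by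
  have hfix : sref β (∑ γ ∈ Rpos.erase β, γ) = ∑ γ ∈ Rpos.erase β, γ := by
    rw [map_sum]
    exact sum_nbij' (sref β) (sref β) (fun γ => h.sref_simple_mem_erase hβ)
      (fun γ => h.sref_simple_mem_erase hβ) (by simp) (by simp) (by simp)
  rw [← add_sum_erase _ _ (h.simple_subset hβ), inner_add_right,
    inner_eq_zero_of_sref_apply_eq hfix, add_zero]

theorem coroot_inner_two_rho (h : IsRootSystem R Rpos Δ) (hβ : β ∈ Δ) :
    ⟪coroot β, (2 : ℝ) • rho Rpos⟫ = 2 := by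
  rw [rho, smul_smul, mul_inv_cancel₀ two_ne_zero, one_smul, coroot, real_inner_smul_left,
    h.inner_simple_sum_pos hβ, div_mul_cancel₀ _ (h.inner_self_pos (h.simple_mem hβ)).ne']

theorem exists_simple_sref_inner_sum_pos_lt (h : IsRootSystem R Rpos Δ) (hα : α ∈ Rpos)
    (hαΔ : α ∉ Δ) :
    ∃ β ∈ Δ, sref β α ∈ Rpos ∧ ⟪sref β α, ∑ γ ∈ Rpos, γ⟫ < ⟪α, ∑ γ ∈ Rpos, γ⟫ := by
  obtain ⟨β, hβ, hαβ⟩ := h.exists_simple_inner_pos hα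
  refine ⟨β, hβ, h.sref_simple_mem_pos hβ hα (fun h' => hαΔ (h' ▸ hβ)), ?_⟩
  have hββ := h.inner_self_pos (h.simple_mem hβ)
  rw [sref_apply, inner_sub_left, real_inner_smul_left, real_inner_comm,
    h.inner_simple_sum_pos hβ, div_mul_cancel₀ _ hββ.ne']
  linarith

theorem sref_mem_closure_simple (h : IsRootSystem R Rpos Δ) {α : E} (hα : α ∈ Rpos) :
    sref α ∈ Subgroup.closure (sref '' (Δ : Set E)) := by
  by_cases hαΔ : α ∈ Δ
  · exact Subgroup.subset_closure ⟨α, hαΔ, rfl⟩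
  obtain ⟨β, hβ, hγ, hlt⟩ := h.exists_simple_sref_inner_sum_pos_lt hα hαΔ
  have hsβ : sref β ∈ Subgroup.closure (sref '' (Δ : Set E)) := Subgroup.subset_closure ⟨β, hβ, rfl⟩
  have hsγ := h.sref_mem_closure_simple hγ
  rw [← sref_sref β α, sref_conj]
  exact mul_mem (mul_mem hsβ hsγ) (inv_mem hsβ)
termination_by #{γ ∈ Rpos | ⟪γ, ∑ δ ∈ Rpos, δ⟫ < ⟪α, ∑ δ ∈ Rpos, δ⟫}
decreasing_by exact card_filter_lt_lt_of_lt hγ hlt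

theorem weylGroup_subset_closure_simple (h : IsRootSystem R Rpos Δ) :
    (weylGroup R : Set (E ≃ₗᵢ[ℝ] E)) ⊆ Submonoid.closure (sref '' (Δ : Set E)) := by
  rw [← closure_sref_image_toSubmonoid, Subgroup.coe_toSubmonoid, SetLike.coe_subset_coe,
    weylGroup, Subgroup.closure_le]
  rintro _ ⟨α, hα, rfl⟩
  rcases h.pos_or_neg α hα with hpos | hneg
  · exact h.sref_mem_closure_simple hpos
  · exact sref_neg α ▸ h.sref_mem_closure_simple hneg

theorem apply_mem_of_mem_closure_simple (h : IsRootSystem R Rpos Δ) {g : E ≃ₗᵢ[ℝ] E}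
    (hg : g ∈ Submonoid.closure (sref '' (Δ : Set E))) (hα : α ∈ R) : g α ∈ R := by
  induction hg using Submonoid.closure_induction generalizing α with
  | mem s hs =>
    obtain ⟨β, hβ, rfl⟩ := hs
    exact h.sref_mem (h.simple_mem hβ) hα
  | one => exact hα
  | mul x y _ _ ihx ihy => exact ihx (ihy hα)

theorem lenW_mul_sref_simple (h : IsRootSystem R Rpos Δ) {w : E ≃ₗᵢ[ℝ] E} (hβ : β ∈ Δ)
    (hw : w β ∈ Rpos) : lenW Rpos (w * sref β) = lenW Rpos w + 1 := by
  have hβp := h.simple_subset hβ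
  have hwsβ : (w * sref β) β ∉ Rpos := by
    change w (sref β β) ∉ Rpos
    rw [sref_self, map_neg]
    exact h.not_both _ hw
  have hrest : #{γ ∈ Rpos.erase β | (w * sref β) γ ∉ Rpos} = #{γ ∈ Rpos.erase β | w γ ∉ Rpos} :=
    card_nbij' (sref β) (sref β)
      (fun γ hγ => by
        simp only [coe_filter, Set.mem_ofPred_eq] at hγ ⊢
        exact ⟨h.sref_simple_mem_erase hβ hγ.1, hγ.2⟩)
      (fun γ hγ => by
        simp only [coe_filter, Set.mem_ofPred_eq] at hγ ⊢
        exact ⟨h.sref_simple_mem_erase hβ hγ.1, by simpa using hγ.2⟩)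
      (fun γ _ => sref_sref β γ) (fun γ _ => sref_sref β γ)
  rw [lenW, lenW, card_filter, card_filter, ← add_sum_erase _ _ hβp, ← add_sum_erase _ _ hβp,
    ← card_filter, ← card_filter, hrest, if_pos hwsβ, if_neg (not_not.2 hw)]
  ring

theorem qbgEdge_mul_sref_simple (h : IsRootSystem R Rpos Δ) {w : E ≃ₗᵢ[ℝ] E} (hβ : β ∈ Δ)
    (hw : w β ∈ R) : qbgEdge Rpos w (w * sref β) := by
  refine ⟨β, h.simple_subset hβ, rfl, ?_⟩
  by_cases hwβ : w β ∈ Rpos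
  · left
    rw [h.lenW_mul_sref_simple hβ hwβ, Nat.cast_succ]
  · right
    have hw' : (w * sref β) β ∈ Rpos := by
      change w (sref β β) ∈ Rpos
      rw [sref_self, map_neg]
      exact h.neg_mem_of_notMem hw hwβ
    have hlen := h.lenW_mul_sref_simple hβ hw'
    rw [mul_assoc, sref_mul_self, mul_one] at hlen
    rw [h.coroot_inner_two_rho hβ, hlen]
    push_cast
    ring

end IsRootSystem

end

theorem stmt_13 (R Rpos Δ : Finset V) (h : IsRootSystem R Rpos Δ)
    (u v : V ≃ₗᵢ[ℝ] V) (hu : u ∈ weylGroup R) (hv : v ∈ weylGroup R) :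
    Relation.ReflTransGen (qbgEdge Rpos) u v := by
  have hW := h.weylGroup_subset_closure_simple
  have hedge : ∀ w ∈ Submonoid.closure (sref '' (Δ : Set V)), ∀ s ∈ sref '' (Δ : Set V),
      qbgEdge Rpos w (w * s) := by
    rintro w hw _ ⟨β, hβ, rfl⟩
    exact h.qbgEdge_mul_sref_simple hβ (h.apply_mem_of_mem_closure_simple hw (h.simple_mem hβ))
  simpa using Submonoid.reflTransGen_mul_of_mem_closure hedge (hW hu)
    (hW (mul_mem (inv_mem hu) hv))
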